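/- arXiv:1906.09949 — 2 statements merged into one kernel-verified Lean document; each statement's English description precedes it below -/
import Mathlib

section
/- There exists a universal constant C such that for every L ∈ ℕ, every susceptible set 𝒮 ⊆ ℤ², every good box Q of side L, and every configuration η in which some column of Q other than the rightmost one is fully infected, there is a legal sequence of moves from η, all at sites of Q, of length at most C·L, ending at a configuration η′ in which the column of Q immediately to the right is fully infected, η′ agrees with η outside Q, and η′ differs from η on at most 3L sites. -/
/-- Sites of the two-dimensional lattice. -/
abbrev Site : Type := ℤ × ℤ

/-- A configuration: `true` iff the site's state is infected. -/
abbrev Cfg : Type := Site → Bool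

/-- A site is infected: susceptible and its state is infected. -/
def Infct (sus : Set Site) (η : Cfg) (x : Site) : Prop := x ∈ sus ∧ η x = true

/-- Nearest-neighbour adjacency in ℤ². -/
def SiteAdj (a b : Site) : Prop :=
  (a.1 = b.1 ∧ (a.2 = b.2 + 1 ∨ a.2 + 1 = b.2)) ∨
  (a.2 = b.2 ∧ (a.1 = b.1 + 1 ∨ a.1 + 1 = b.1))

/-- The FA2f constraint at `x`: at least two nearest neighbours of `x` are susceptible
and infected. -/
def Constr (sus : Set Site) (η : Cfg) (x : Site) : Prop :=
  2 ≤ {y : Site | SiteAdj x y ∧ Infct sus η y}.ncard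

/-- A move: a site together with the state it is set to (`true` = infected). -/
abbrev Move : Type := Site × Bool

/-- The configuration after applying the first `n` moves of `ms` to `η`. -/
def evolve (η : Cfg) (ms : ℕ → Move) : ℕ → Cfg
  | 0 => η
  | n + 1 => Function.update (evolve η ms n) (ms n).1 (ms n).2

/-- The first `k` moves of `ms` form a legal sequence of moves from `η`:
each move is at a susceptible site whose constraint is satisfied at the time of the move. -/
def LegalSeq (sus : Set Site) (η : Cfg) (ms : ℕ → Move) (k : ℕ) : Prop :=
  ∀ i < k, (ms i).1 ∈ sus ∧ Constr sus (evolve η ms i) (ms i).1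

/-- The box `b + [0,L)²`. -/
def boxAt (L : ℕ) (b : Site) : Set Site :=
  {y | b.1 ≤ y.1 ∧ y.1 < b.1 + L ∧ b.2 ≤ y.2 ∧ y.2 < b.2 + L}

/-- The box `b + [0,L)²` is good: all its sites are susceptible and each of its `L` rows
and each of its `L` columns contains at least one infected site. -/
def GoodBoxAt (L : ℕ) (sus : Set Site) (η : Cfg) (b : Site) : Prop :=
  (∀ y ∈ boxAt L b, y ∈ sus) ∧
  (∀ j < L, ∃ i < L, Infct sus η (b.1 + i, b.2 + j)) ∧
  (∀ i < L, ∃ j < L, Infct sus η (b.1 + i, b.2 + j))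

/-- Column `i` of the box `b + [0,L)²` is fully infected. -/
def InfColAt (L : ℕ) (sus : Set Site) (η : Cfg) (b : Site) (i : ℕ) : Prop :=
  ∀ j < L, Infct sus η (b.1 + i, b.2 + j)

lemma adj_finite (x : Site) : {y : Site | SiteAdj x y}.Finite := by
  apply Set.Finite.subset
    (Set.toFinite ({(x.1, x.2+1), (x.1, x.2-1), (x.1+1, x.2), (x.1-1, x.2)} : Set Site))
  rintro ⟨y1, y2⟩ h
  simp only [SiteAdj] at h
  simp only [Set.mem_insert_iff, Set.mem_singleton_iff, Prod.ext_iff]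
  rcases h with ⟨h1, h2 | h2⟩ | ⟨h1, h2 | h2⟩ <;> simp_all

lemma constr_of_two (sus : Set Site) (η : Cfg) (x y1 y2 : Site) (h12 : y1 ≠ y2)
    (ha1 : SiteAdj x y1) (hi1 : Infct sus η y1)
    (ha2 : SiteAdj x y2) (hi2 : Infct sus η y2) : Constr sus η x := by
  have hfin : {y : Site | SiteAdj x y ∧ Infct sus η y}.Finite :=
    (adj_finite x).subset (fun y hy => hy.1)
  have hsub : ({y1, y2} : Set Site) ⊆ {y : Site | SiteAdj x y ∧ Infct sus η y} := by
    rintro z (rfl | rfl)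
    · exact ⟨ha1, hi1⟩
    · exact ⟨ha2, hi2⟩
  calc (2 : ℕ) = ({y1, y2} : Set Site).ncard := (Set.ncard_pair h12).symm
    _ ≤ _ := Set.ncard_le_ncard hsub hfin

/-- Row visited at step t of the zipper started at row j0. -/
def zrow (j0 t : ℕ) : ℕ := if t < j0 then j0 - 1 - t else t + 1

lemma zrow_inj (j0 : ℕ) : Function.Injective (zrow j0) := by
  intro s t h
  unfold zrow at h
  split at h <;> split at h <;> omega

lemma zrow_ne (j0 t : ℕ) : zrow j0 t ≠ j0 := by
  unfold zrow; split <;> omega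

theorem column_propagation :
    ∃ C : ℕ, ∀ (L : ℕ) (sus : Set Site) (η : Cfg) (b : Site),
    GoodBoxAt L sus η b →
    ∀ i : ℕ, i + 1 < L → InfColAt L sus η b i →
    ∃ (ms : ℕ → Move) (k : ℕ),
      k ≤ C * L ∧
      LegalSeq sus η ms k ∧
      (∀ t < k, (ms t).1 ∈ boxAt L b) ∧
      InfColAt L sus (evolve η ms k) b (i + 1) ∧
      (∀ y ∉ boxAt L b, evolve η ms k y = η y) ∧
      {y : Site | evolve η ms k y ≠ η y}.ncard ≤ 3 * L := by
  refine ⟨1, fun L sus η b hgood i hiL hcol => ?_⟩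
  obtain ⟨hsus, _, hcols⟩ := hgood
  obtain ⟨j0, hj0L, hj0inf⟩ := hcols (i + 1) hiL
  set col : ℕ → Site := fun j => (b.1 + (i : ℤ) + 1, b.2 + (j : ℤ)) with hcoldef
  have hcolapp : ∀ j : ℕ, col j = (b.1 + (i : ℤ) + 1, b.2 + (j : ℤ)) := fun j => rfl
  have hcol_inj : Function.Injective col := by
    intro a c h
    have h2 : b.2 + (a : ℤ) = b.2 + (c : ℤ) := congrArg Prod.snd h
    omega
  have hcolj0 : col j0 = (b.1 + ((i + 1 : ℕ) : ℤ), b.2 + (j0 : ℤ)) := by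
    rw [hcolapp]
    congr 1
    push_cast
    ring
  set ms : ℕ → Move := fun t => (col (zrow j0 t), true) with hms
  have hmst : ∀ t, (ms t).1 = col (zrow j0 t) := fun t => rfl
  set k : ℕ := L - 1 with hk
  have hmemL : ∀ j < L, col j ∈ boxAt L b := by
    intro j hj
    rw [hcolapp]
    exact ⟨by omega, by omega, by omega, by omega⟩
  have hmemC : ∀ j < L, ((b.1 + (i : ℤ), b.2 + (j : ℤ)) : Site) ∈ boxAt L b := by
    intro j hj
    exact ⟨by omega, by omega, by omega, by omega⟩
  have hzlt : ∀ t < k, zrow j0 t < L := by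
    intro t ht; unfold zrow; split <;> omega
  have claim1 : ∀ t, ∀ y : Site, (∀ s < t, y ≠ col (zrow j0 s)) → evolve η ms t y = η y := by
    intro t
    induction t with
    | zero => intro y _; rfl
    | succ n ih =>
      intro y hy
      have hne : y ≠ (ms n).1 := by rw [hmst]; exact hy n (Nat.lt_succ_self n)
      show Function.update (evolve η ms n) (ms n).1 (ms n).2 y = η y
      rw [Function.update_of_ne hne]
      exact ih y (fun s hs => hy s (Nat.lt_succ_of_lt hs))
  have claim2 : ∀ t, ∀ s < t, evolve η ms t (col (zrow j0 s)) = true := by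
    intro t
    induction t with
    | zero => intro s hs; omega
    | succ n ih =>
      intro s hs
      show Function.update (evolve η ms n) (ms n).1 (ms n).2 (col (zrow j0 s)) = true
      rcases Nat.lt_succ_iff_lt_or_eq.mp hs with hs' | rfl
      · have hne : col (zrow j0 s) ≠ (ms n).1 := by
          rw [hmst]
          intro h
          exact absurd (zrow_inj j0 (hcol_inj h)) (by omega)
        rw [Function.update_of_ne hne]
        exact ih s hs'
      · rw [hmst]
        exact Function.update_self _ _ _
  have huntouched : ∀ (t : ℕ) (y : Site), y.1 = b.1 + (i : ℤ) → evolve η ms t y = η y := by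
    intro t y hy
    refine claim1 t y (fun s _ h => ?_)
    rw [h, hcolapp] at hy
    simp only at hy
    omega
  have hj0untouched : ∀ t : ℕ, evolve η ms t (col j0) = η (col j0) := by
    intro t
    exact claim1 t _ (fun s _ h => zrow_ne j0 s (hcol_inj h.symm))
  have hj0true : η (col j0) = true := by rw [hcolj0]; exact hj0inf.2
  refine ⟨ms, k, by omega, ?_, ?_, ?_, ?_, ?_⟩
  · -- legality
    intro t ht
    have hzt := hzlt t ht
    refine ⟨by rw [hmst]; exact hsus _ (hmemL _ hzt), ?_⟩
    -- neighbour 1 : the site in column i on the same row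
    set y1 : Site := (b.1 + (i : ℤ), b.2 + (zrow j0 t : ℤ)) with hy1
    have ha1 : SiteAdj (ms t).1 y1 := by
      rw [hmst, hcolapp]
      exact Or.inr ⟨rfl, Or.inl rfl⟩
    have hi1 : Infct sus (evolve η ms t) y1 := by
      refine ⟨hsus _ (hmemC _ hzt), ?_⟩
      rw [huntouched t y1 rfl]
      exact (hcol _ hzt).2
    -- neighbour 2 : an already-infected site in column i+1 on an adjacent row
    obtain ⟨j', hadj2, hj'lt, hinf2⟩ :
        ∃ j', SiteAdj (ms t).1 (col j') ∧ j' < L ∧ evolve η ms t (col j') = true := by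
      rcases Nat.lt_or_ge t j0 with htj | htj
      · -- downward phase: neighbour is row j0 - t (above)
        have hzv : zrow j0 t = j0 - 1 - t := by unfold zrow; rw [if_pos htj]
        refine ⟨j0 - t, ?_, by omega, ?_⟩
        · rw [hmst, hcolapp, hcolapp]
          refine Or.inl ⟨rfl, Or.inr ?_⟩
          show b.2 + ((zrow j0 t : ℕ) : ℤ) + 1 = b.2 + ((j0 - t : ℕ) : ℤ)
          rw [hzv]; omega
        · rcases Nat.eq_zero_or_pos t with rfl | ht1
          · rw [Nat.sub_zero]
            show η (col j0) = true
            exact hj0true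
          · have hzz : j0 - t = zrow j0 (t - 1) := by unfold zrow; split <;> omega
            rw [hzz]
            exact claim2 t (t - 1) (by omega)
      · -- upward phase: neighbour is row t (below)
        have hzv : zrow j0 t = t + 1 := by unfold zrow; rw [if_neg (by omega)]
        refine ⟨t, ?_, by omega, ?_⟩
        · rw [hmst, hcolapp, hcolapp]
          refine Or.inl ⟨rfl, Or.inl ?_⟩
          show b.2 + ((zrow j0 t : ℕ) : ℤ) = b.2 + (t : ℤ) + 1
          rw [hzv]; push_cast; ring
        · rcases Nat.eq_or_lt_of_le htj with rfl | htj'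
          · rw [hj0untouched]
            exact hj0true
          · have hzz : t = zrow j0 (t - 1) := by unfold zrow; split <;> omega
            have := claim2 t (t - 1) (by omega)
            rwa [← hzz] at this
    have hi2 : Infct sus (evolve η ms t) (col j') := ⟨hsus _ (hmemL _ hj'lt), hinf2⟩
    refine constr_of_two sus _ (ms t).1 y1 (col j') ?_ ha1 hi1 hadj2 hi2
    intro h
    rw [hy1, hcolapp] at h
    have h1 : b.1 + (i : ℤ) = b.1 + (i : ℤ) + 1 := congrArg Prod.fst h
    omega
  · -- moves stay in the box
    intro t ht
    rw [hmst]
    exact hmemL _ (hzlt t ht)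
  · -- column i+1 is fully infected at the end
    intro j hj
    have hsite : ((b.1 + ((i + 1 : ℕ) : ℤ), b.2 + (j : ℤ)) : Site) = col j := by
      rw [hcolapp]; congr 1; push_cast; ring
    rw [hsite]
    refine ⟨hsus _ (hmemL _ hj), ?_⟩
    rcases lt_trichotomy j j0 with h | rfl | h
    · have hzz : j = zrow j0 (j0 - 1 - j) := by unfold zrow; split <;> omega
      rw [hzz]
      exact claim2 k (j0 - 1 - j) (by omega)
    · rw [hj0untouched]
      exact hj0true
    · have hzz : j = zrow j0 (j - 1) := by unfold zrow; split <;> omega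
      rw [hzz]
      exact claim2 k (j - 1) (by omega)
  · -- unchanged outside the box
    intro y hy
    refine claim1 k y (fun s hs h => hy ?_)
    rw [h]
    exact hmemL _ (hzlt s hs)
  · -- at most 3L changes
    have hsub : {y : Site | evolve η ms k y ≠ η y} ⊆
        ↑((Finset.range k).image (fun s => col (zrow j0 s))) := by
      intro y hy
      by_contra h
      simp only [Finset.coe_image, Finset.coe_range, Set.mem_image, Set.mem_Iio] at h
      push_neg at h
      exact hy (claim1 k y (fun s hs hEq => h s hs hEq.symm))
    calc {y : Site | evolve η ms k y ≠ η y}.ncard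
        ≤ (((Finset.range k).image (fun s => col (zrow j0 s))) : Finset Site).card := by
          rw [← Set.ncard_coe_finset]
          exact Set.ncard_le_ncard hsub (Set.toFinite _)
      _ ≤ k := Finset.card_image_le.trans (by simp)
      _ ≤ 3 * L := by omega
end

section
/- There exists a universal constant C such that for every L ∈ ℕ, every susceptible set 𝒮 ⊆ ℤ², every good box Q of side L, and every configuration η in which some column of Q is fully infected, there is a legal sequence of moves from η, all at sites of Q, of length at most C·L², ending at a configuration η′ in which some row of Q is fully infected, η′ agrees with η outside Q, and every configuration along the sequence differs from η on at most 3L sites. -/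
/-- Row `j` of the box `b + [0,L)²` is fully infected. -/
def InfRowAt (L : ℕ) (sus : Set Site) (η : Cfg) (b : Site) (j : ℕ) : Prop :=
  ∀ i < L, Infct sus η (b.1 + i, b.2 + j)

/-!
The infection is carried across the box one column at a time. If column `c` is fully infected
and an adjacent column `c'` contains an infected site, column `c'` is infected upwards and then
downwards from that site, each new site having an infected vertical neighbour in `c'` and an
infected horizontal neighbour in `c`. Column `c` is then restored to its initial state from the
top down, except for its bottom site: each restored site still sees its neighbour in `c'` and the
not yet restored site below it. Such a step costs fewer than `2L` moves, and along the way only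
the two columns and the bottom sites of the columns visited so far differ from the initial
configuration, that is at most `3L` sites. A column not visited yet is untouched, so the good box
supplies it with an infected site; a visited one keeps its infected bottom site. Sweeping from
column `i` to the left edge and then to the right edge therefore visits every column and leaves the
bottom row infected after at most `2L (i + L - 1) ≤ 4L²` moves.
-/

open Finset Function

lemma finite_setOf_siteAdj (x : Site) : {y | SiteAdj x y}.Finite := by
  refine (Set.toFinite ({(x.1, x.2 + 1), (x.1, x.2 - 1), (x.1 + 1, x.2), (x.1 - 1, x.2)} :
    Set Site)).subset fun y hy => ?_
  rcases hy with ⟨h1, h2 | h2⟩ | ⟨h1, h2 | h2⟩ <;> simp [Prod.ext_iff] <;> omega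

lemma constr_of_infct_of_infct {sus : Set Site} {θ : Cfg} {x y₁ y₂ : Site} (hne : y₁ ≠ y₂)
    (ha₁ : SiteAdj x y₁) (ha₂ : SiteAdj x y₂) (h₁ : Infct sus θ y₁) (h₂ : Infct sus θ y₂) :
    Constr sus θ x := by
  have hsub : ({y₁, y₂} : Set Site) ⊆ {y | SiteAdj x y ∧ Infct sus θ y} := by
    rintro y (rfl | rfl)
    exacts [⟨ha₁, h₁⟩, ⟨ha₂, h₂⟩]
  have := Set.ncard_le_ncard hsub ((finite_setOf_siteAdj x).subset fun y hy => hy.1)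
  rwa [Set.ncard_pair hne] at this

def seqAppend (ms : ℕ → Move) (k : ℕ) (ms' : ℕ → Move) : ℕ → Move :=
  fun t => if t < k then ms t else ms' (t - k)

lemma evolve_seqAppend_of_le {η : Cfg} {ms ms' : ℕ → Move} {k t : ℕ} (h : t ≤ k) :
    evolve η (seqAppend ms k ms') t = evolve η ms t := by
  induction t with
  | zero => rfl
  | succ t ih => simp only [evolve, ih (by omega), seqAppend, if_pos (by omega : t < k)]

lemma evolve_seqAppend_add {η : Cfg} {ms ms' : ℕ → Move} {k t : ℕ} :
    evolve η (seqAppend ms k ms') (k + t) = evolve (evolve η ms k) ms' t := by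
  induction t with
  | zero => exact evolve_seqAppend_of_le le_rfl
  | succ t ih =>
    rw [← add_assoc]
    simp only [evolve, ih, seqAppend, if_neg (by omega : ¬k + t < k), Nat.add_sub_cancel_left]

lemma evolve_eqOn_compl {η : Cfg} {ms : ℕ → Move} {R : Set Site} {t : ℕ}
    (h : ∀ s < t, (ms s).1 ∈ R) : Set.EqOn (evolve η ms t) η Rᶜ := by
  induction t with
  | zero => exact fun _ _ => rfl
  | succ t ih =>
    intro y hy
    rw [evolve, update_of_ne fun he => hy (by rw [he]; exact h t t.lt_succ_self)]
    exact ih (fun s hs => h s (by omega)) hy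

def Reaches (sus R : Set Site) (Q : Cfg → Prop) (n : ℕ) (ξ ξ' : Cfg) : Prop :=
  ∃ (ms : ℕ → Move) (k : ℕ), k ≤ n ∧ LegalSeq sus ξ ms k ∧ (∀ t < k, (ms t).1 ∈ R) ∧
    (∀ t ≤ k, Q (evolve ξ ms t)) ∧ evolve ξ ms k = ξ'

namespace Reaches

variable {sus R : Set Site} {Q : Cfg → Prop} {n m : ℕ} {ξ ξ' ξ'' : Cfg}

lemma refl (hQ : Q ξ) : Reaches sus R Q 0 ξ ξ :=
  ⟨fun _ => ((0, 0), true), 0, le_rfl, fun _ h => (Nat.not_lt_zero _ h).elim,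
    fun _ h => (Nat.not_lt_zero _ h).elim,
    fun t ht => by rwa [Nat.le_zero.1 ht], rfl⟩

lemma update {x : Site} (a : Bool) (hx : x ∈ sus) (hR : x ∈ R) (hc : Constr sus ξ x) (hQ : Q ξ)
    (hQ' : Q (Function.update ξ x a)) : Reaches sus R Q 1 ξ (Function.update ξ x a) := by
  refine ⟨fun _ => (x, a), 1, le_rfl, fun t ht => ?_, fun _ _ => hR, fun t ht => ?_, rfl⟩
  · obtain rfl : t = 0 := by omega
    exact ⟨hx, hc⟩
  · rcases Nat.le_one_iff_eq_zero_or_eq_one.1 ht with rfl | rfl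
    exacts [hQ, hQ']

lemma trans (h : Reaches sus R Q n ξ ξ') (h' : Reaches sus R Q m ξ' ξ'') :
    Reaches sus R Q (n + m) ξ ξ'' := by
  obtain ⟨ms, k, hk, hlegal, hR, hQ, rfl⟩ := h
  obtain ⟨ms', k', hk', hlegal', hR', hQ', rfl⟩ := h'
  refine ⟨seqAppend ms k ms', k + k', by omega, fun t ht => ?_, fun t ht => ?_, fun t ht => ?_,
    evolve_seqAppend_add⟩
  · rcases lt_or_ge t k with htk | htk
    · rw [evolve_seqAppend_of_le htk.le]
      simpa only [seqAppend, if_pos htk] using hlegal t htk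
    · obtain ⟨s, rfl⟩ := Nat.exists_eq_add_of_le htk
      rw [evolve_seqAppend_add]
      simpa only [seqAppend, if_neg (by omega : ¬k + s < k), Nat.add_sub_cancel_left]
        using hlegal' s (by omega)
  · rcases lt_or_ge t k with htk | htk
    · simpa only [seqAppend, if_pos htk] using hR t htk
    · simpa only [seqAppend, if_neg (not_lt.2 htk)] using hR' (t - k) (by omega)
  · rcases le_or_gt t k with htk | htk
    · rw [evolve_seqAppend_of_le htk]
      exact hQ t htk
    · obtain ⟨s, rfl⟩ := Nat.exists_eq_add_of_le htk.le
      rw [evolve_seqAppend_add]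
      exact hQ' s (by omega)

lemma mono {R' : Set Site} {Q' : Cfg → Prop} {n' : ℕ} (h : Reaches sus R Q n ξ ξ') (hn : n ≤ n')
    (hR : R ⊆ R') (hQ : ∀ θ, Q θ → Q' θ) : Reaches sus R' Q' n' ξ ξ' := by
  obtain ⟨ms, k, hk, hlegal, hRk, hQk, rfl⟩ := h
  exact ⟨ms, k, hk.trans hn, hlegal, fun t ht => hR (hRk t ht), fun t ht => hQ _ (hQk t ht), rfl⟩

lemma eqOn_compl (h : Reaches sus R Q n ξ ξ') :
    Reaches sus R (fun θ => Q θ ∧ Set.EqOn θ ξ Rᶜ) n ξ ξ' := by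
  obtain ⟨ms, k, hk, hlegal, hR, hQ, rfl⟩ := h
  exact ⟨ms, k, hk, hlegal, hR,
    fun t ht => ⟨hQ t ht, evolve_eqOn_compl fun s hs => hR s (by omega)⟩, rfl⟩

lemma target (h : Reaches sus R Q n ξ ξ') : Q ξ' := by
  obtain ⟨ms, k, -, -, -, hQ, rfl⟩ := h
  exact hQ k le_rfl

end Reaches

lemma reaches_piecewise {sus R : Set Site} {ξ f : Cfg} (p : ℕ → Site) (n : ℕ)
    (hsus : ∀ k < n, p k ∈ sus) (hR : ∀ k < n, p k ∈ R)
    (hc : ∀ k < n, Constr sus (((range k).image p).piecewise f ξ) (p k)) :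
    Reaches sus R (fun _ => True) n ξ (((range n).image p).piecewise f ξ) := by
  induction n with
  | zero =>
    convert Reaches.refl (Q := fun _ => True) trivial
    ext1 y
    exact piecewise_eq_of_notMem _ _ _ (by simp)
  | succ n ih =>
    rw [range_add_one, image_insert, piecewise_insert]
    exact (ih (fun k hk => hsus k (by omega)) (fun k hk => hR k (by omega))
      (fun k hk => hc k (by omega))).trans
      (Reaches.update _ (hsus n n.lt_succ_self) (hR n n.lt_succ_self) (hc n n.lt_succ_self)
        trivial trivial)

lemma reaches_infect_ray {sus R : Set Site} {ξ : Cfg} {x x' r d : ℤ} (m : ℕ)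
    (hd : d = 1 ∨ d = -1) (hadj : x' = x + 1 ∨ x' + 1 = x) (hseed : Infct sus ξ (x', r))
    (hsus : ∀ k < m, (x', r + d * (k + 1)) ∈ sus) (hR : ∀ k < m, (x', r + d * (k + 1)) ∈ R)
    (hrail : ∀ k < m, Infct sus ξ (x, r + d * (k + 1))) :
    Reaches sus R (fun _ => True) m ξ
      (((range m).image fun k : ℕ => (x', r + d * (k + 1))).piecewise (fun _ => true) ξ) := by
  refine reaches_piecewise _ m hsus hR fun k hk => ?_
  have hxx' : x ≠ x' := by omega
  refine constr_of_infct_of_infct (y₁ := (x', r + d * k)) (y₂ := (x, r + d * (k + 1)))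
    (by simp [hxx'.symm]) (Or.inl ⟨rfl, by rcases hd with rfl | rfl <;> omega⟩)
    (Or.inr ⟨rfl, by omega⟩) ?_ ⟨(hrail k hk).1, ?_⟩
  · cases k with
    | zero =>
      refine ⟨by simpa using hseed.1, ?_⟩
      rw [piecewise_eq_of_notMem _ _ _ (by simp)]
      simpa using hseed.2
    | succ k =>
      refine ⟨by simpa using hsus k (by omega), piecewise_eq_of_mem _ _ _ ?_⟩
      exact mem_image.2 ⟨k, mem_range.2 k.lt_succ_self, by push_cast; ring_nf⟩
  · rw [piecewise_eq_of_notMem _ _ _ (by simp [hxx'.symm])]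
    exact (hrail k hk).2

def column (x lo : ℤ) (n : ℕ) : Finset Site := (range n).image fun j : ℕ => (x, lo + j)

lemma mem_column {x lo : ℤ} {n : ℕ} {y : Site} :
    y ∈ column x lo n ↔ y.1 = x ∧ lo ≤ y.2 ∧ y.2 < lo + n := by
  constructor
  · simp only [column, mem_image, mem_range]
    rintro ⟨j, hj, rfl⟩
    omega
  · rintro ⟨h1, h2, h3⟩
    exact mem_image.2 ⟨(y.2 - lo).toNat, mem_range.2 (by omega), Prod.ext h1.symm (by simp; omega)⟩

lemma reaches_infect_column {sus : Set Site} {ξ : Cfg} {x x' lo : ℤ} {n s : ℕ}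
    (hadj : x' = x + 1 ∨ x' + 1 = x) (hsus : ↑(column x' lo n) ⊆ sus)
    (hrail : ∀ y ∈ column x lo n, Infct sus ξ y) (hs : s < n) (hseed : ξ (x', lo + s) = true) :
    ∃ ξ', Reaches sus ↑(column x' lo n) (fun _ => True) (n - 1) ξ ξ' ∧
      ∀ y ∈ column x' lo n, ξ' y = true := by
  have hxx' : x ≠ x' := by omega
  have hmem : ∀ {x₀ j : ℤ}, lo ≤ j → j < lo + n → (x₀, j) ∈ column x₀ lo n :=
    fun h1 h2 => mem_column.2 ⟨rfl, h1, h2⟩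
  set up := (range (n - 1 - s)).image fun k : ℕ => (x', lo + s + 1 * (k + 1))
  set down := (range s).image fun k : ℕ => (x', lo + s + -1 * (k + 1))
  have hup : Reaches sus ↑(column x' lo n) (fun _ => True) (n - 1 - s) ξ
      (up.piecewise (fun _ => true) ξ) :=
    reaches_infect_ray _ (Or.inl rfl) hadj ⟨hsus (hmem (by omega) (by omega)), hseed⟩
      (fun k hk => hsus (hmem (by omega) (by omega))) (fun k hk => hmem (by omega) (by omega))
      (fun k hk => hrail _ (hmem (by omega) (by omega)))
  have hdown : Reaches sus ↑(column x' lo n) (fun _ => True) s (up.piecewise (fun _ => true) ξ)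
      (down.piecewise (fun _ => true) (up.piecewise (fun _ => true) ξ)) := by
    refine reaches_infect_ray _ (Or.inr rfl) hadj ⟨hsus (hmem (by omega) (by omega)), ?_⟩
      (fun k hk => hsus (hmem (by omega) (by omega))) (fun k hk => hmem (by omega) (by omega))
      (fun k hk => ?_)
    · rw [piecewise_eq_of_notMem _ _ _ (by simp [up]; omega)]
      exact hseed
    · rw [Infct, piecewise_eq_of_notMem _ _ _ (by simp [up, hxx'.symm])]
      exact hrail _ (hmem (by omega) (by omega))
  refine ⟨_, (hup.trans hdown).mono (by omega) subset_rfl fun _ h => h, fun y hy => ?_⟩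
  obtain ⟨j, hj, rfl⟩ := mem_image.1 hy
  rw [mem_range] at hj
  rcases lt_trichotomy j s with hjs | rfl | hjs
  · exact piecewise_eq_of_mem _ _ _ (mem_image.2 ⟨s - 1 - j, by simp; omega, by simp; omega⟩)
  · rw [piecewise_eq_of_notMem _ _ _ (by simp [down]; omega),
      piecewise_eq_of_notMem _ _ _ (by simp [up]; omega)]
    exact hseed
  · rw [piecewise_eq_of_notMem _ _ _ (by simp [down]; omega)]
    exact piecewise_eq_of_mem _ _ _ (mem_image.2 ⟨j - s - 1, by simp; omega, by simp; omega⟩)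

lemma reaches_restore_column {sus : Set Site} {ξ f : Cfg} {x x' lo : ℤ} {n : ℕ}
    (hadj : x' = x + 1 ∨ x' + 1 = x) (hsus : ↑(column x lo n) ⊆ sus)
    (hcol : ∀ y ∈ column x lo n, ξ y = true) (hrail : ∀ y ∈ column x' lo n, Infct sus ξ y) :
    ∃ ξ', Reaches sus ↑(column x lo n) (fun _ => True) (n - 1) ξ ξ' ∧ ξ' (x, lo) = ξ (x, lo) ∧
      ∀ y ∈ column x lo n, y ≠ (x, lo) → ξ' y = f y := by
  have hxx' : x ≠ x' := by omega
  have hmem : ∀ {x₀ j : ℤ}, lo ≤ j → j < lo + n → (x₀, j) ∈ column x₀ lo n :=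
    fun h1 h2 => mem_column.2 ⟨rfl, h1, h2⟩
  refine ⟨_, reaches_piecewise (f := f) (fun k : ℕ => (x, lo + n - (k + 1))) (n - 1)
    (fun k hk => hsus (hmem (by omega) (by omega))) (fun k hk => hmem (by omega) (by omega))
    fun k hk => ?_, ?_, fun y hy hne => ?_⟩
  · refine constr_of_infct_of_infct (y₁ := (x', lo + n - (k + 1))) (y₂ := (x, lo + n - (k + 2)))
      (by simp [hxx'.symm]) (Or.inr ⟨rfl, by omega⟩) (Or.inl ⟨rfl, Or.inl (by omega)⟩) ?_ ?_
    · rw [Infct, piecewise_eq_of_notMem _ _ _ (by simp)]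
      exact hrail _ (hmem (by omega) (by omega))
    · rw [Infct, piecewise_eq_of_notMem _ _ _ (by simp; omega)]
      exact ⟨hsus (hmem (by omega) (by omega)), hcol _ (hmem (by omega) (by omega))⟩
  · exact piecewise_eq_of_notMem _ _ _ (by simp; omega)
  · obtain ⟨h1, h2, h3⟩ := mem_column.1 hy
    refine piecewise_eq_of_mem _ _ _ (mem_image.2 ⟨(lo + n - 1 - y.2).toNat, ?_, ?_⟩)
    · rw [mem_range]
      have : y.2 ≠ lo := fun h => hne (Prod.ext h1 h)
      omega
    · exact Prod.ext h1.symm (by omega)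

lemma notMem_column_of_mem_column {x x' lo : ℤ} {n : ℕ} (h : x ≠ x') {y : Site}
    (hy : y ∈ column x lo n) :
    y ∉ column x' lo n := fun hy' => h ((mem_column.1 hy).1.symm.trans (mem_column.1 hy').1)

lemma reaches_shift_column {sus : Set Site} {ξ f : Cfg} {x x' lo : ℤ} {n s : ℕ}
    (hadj : x' = x + 1 ∨ x' + 1 = x) (hsus : ↑(column x lo n ∪ column x' lo n) ⊆ sus)
    (hcol : ∀ y ∈ column x lo n, ξ y = true) (hs : s < n) (hseed : ξ (x', lo + s) = true) :
    ∃ ξ', Reaches sus ↑(column x lo n ∪ column x' lo n) (fun _ => True) (2 * n) ξ ξ' ∧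
      (∀ y ∈ column x' lo n, ξ' y = true) ∧ ξ' (x, lo) = true ∧
      ∀ y ∈ column x lo n, y ≠ (x, lo) → ξ' y = f y := by
  have hxx' : x ≠ x' := by omega
  have hsus' : ↑(column x' lo n) ⊆ sus := fun y hy => hsus (by simp_all)
  have hsusx : ↑(column x lo n) ⊆ sus := fun y hy => hsus (by simp_all)
  obtain ⟨ξ₁, h₁, hcol₁⟩ :=
    reaches_infect_column hadj hsus' (fun y hy => ⟨hsusx hy, hcol y hy⟩) hs hseed
  have hξ₁ : Set.EqOn ξ₁ ξ (↑(column x' lo n))ᶜ := h₁.eqOn_compl.target.2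
  obtain ⟨ξ₂, h₂, hbot, hrest⟩ := reaches_restore_column (f := f) hadj hsusx
    (fun y hy => (hξ₁ (notMem_column_of_mem_column hxx' hy)).trans (hcol y hy))
    (fun y hy => ⟨hsus' hy, hcol₁ y hy⟩)
  have hξ₂ : Set.EqOn ξ₂ ξ₁ (↑(column x lo n))ᶜ := h₂.eqOn_compl.target.2
  have hlo : (x, lo) ∈ column x lo n := mem_column.2 ⟨rfl, le_rfl, by omega⟩
  refine ⟨ξ₂, (h₁.mono le_rfl subset_union_right fun _ h => h).trans
      (h₂.mono le_rfl subset_union_left fun _ h => h) |>.mono (by omega) subset_rfl fun _ h => h,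
    fun y hy => (hξ₂ (notMem_column_of_mem_column hxx'.symm hy)).trans (hcol₁ y hy), ?_, hrest⟩
  rw [hbot, hξ₁ (notMem_column_of_mem_column hxx' hlo)]
  exact hcol _ hlo

def bottomRow (b : Site) (V : Finset ℕ) : Finset Site := V.image fun v : ℕ => (b.1 + v, b.2)

lemma card_column_le (x lo : ℤ) (n : ℕ) : (column x lo n).card ≤ n :=
  card_image_le.trans (card_range n).le

lemma ncard_le_three_mul {L c c' : ℕ} {b : Site} {V : Finset ℕ} (hV : V ⊆ range L)
    {S : Set Site} (hS : S ⊆ ↑(bottomRow b V ∪ column (b.1 + c) b.2 L ∪ column (b.1 + c') b.2 L)) :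
    S.ncard ≤ 3 * L := by
  have hbot : (bottomRow b V).card ≤ L :=
    card_image_le.trans ((card_le_card hV).trans (card_range L).le)
  calc S.ncard ≤ (bottomRow b V ∪ column (b.1 + c) b.2 L ∪ column (b.1 + c') b.2 L).card :=
        (Set.ncard_le_ncard hS (finite_toSet _)).trans (Set.ncard_coe_finset _).le
    _ ≤ (bottomRow b V).card + (column (b.1 + c) b.2 L).card + (column (b.1 + c') b.2 L).card :=
        (card_union_le _ _).trans (Nat.add_le_add_right (card_union_le _ _) _)
    _ ≤ 3 * L := by linarith [card_column_le (b.1 + c) b.2 L, card_column_le (b.1 + c') b.2 L]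

lemma column_subset_boxAt {L c : ℕ} {b : Site} (hc : c < L) :
    ↑(column (b.1 + c) b.2 L) ⊆ boxAt L b := fun y hy => by
  obtain ⟨h1, h2, h3⟩ := mem_column.1 (mem_coe.1 hy)
  exact ⟨by omega, by omega, by omega, by omega⟩

/-- The state of the sweep: `c` is the current column and `V` the set of columns visited so far. -/
structure SweepInv (L : ℕ) (η : Cfg) (b : Site) (ξ : Cfg) (V : Finset ℕ) (c : ℕ) : Prop where
  mem : c ∈ V
  subset : V ⊆ range L
  col : ∀ y ∈ column (b.1 + c) b.2 L, ξ y = true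
  bottom : ∀ v ∈ V, ξ (b.1 + v, b.2) = true
  mem_of_ne : ∀ y, ξ y ≠ η y → y ∈ bottomRow b V ∪ column (b.1 + c) b.2 L

namespace SweepInv

variable {L : ℕ} {sus : Set Site} {η ξ : Cfg} {b : Site} {V : Finset ℕ} {c c' : ℕ}

lemma initial {i : ℕ} (hi : i < L) (hcol : InfColAt L sus η b i) : SweepInv L η b η {i} i where
  mem := mem_singleton_self i
  subset := singleton_subset_iff.2 (mem_range.2 hi)
  col y hy := by
    obtain ⟨j, hj, rfl⟩ := mem_image.1 hy
    exact (hcol j (mem_range.1 hj)).2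
  bottom v hv := by
    rw [mem_singleton.1 hv]
    simpa using (hcol 0 (by omega)).2
  mem_of_ne y hy := absurd rfl hy

lemma ncard_ne_le (h : SweepInv L η b ξ V c) : {y | ξ y ≠ η y}.ncard ≤ 3 * L :=
  ncard_le_three_mul (b := b) (c := c) (c' := c) h.subset fun y hy => by
    simpa [or_assoc] using h.mem_of_ne y hy

lemma exists_seed (h : SweepInv L η b ξ V c) (hc' : c' ≠ c)
    (hη : ∃ j < L, η (b.1 + c', b.2 + j) = true) : ∃ j < L, ξ (b.1 + c', b.2 + j) = true := by
  by_cases hV : c' ∈ V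
  · exact ⟨0, by have := mem_range.1 (h.subset hV); omega, by simpa using h.bottom c' hV⟩
  obtain ⟨j, hj, hηj⟩ := hη
  refine ⟨j, hj, by_contra fun hne => ?_⟩
  rcases mem_union.1 (h.mem_of_ne _ (by rwa [hηj])) with hy | hy
  · obtain ⟨v, hv, hvy⟩ := mem_image.1 hy
    obtain rfl : v = c' := by simp only [Prod.mk.injEq] at hvy; omega
    exact hV hv
  · exact hc' (by have := (mem_column.1 hy).1; simp only at this; omega)

lemma shift {ξ' : Cfg} (h : SweepInv L η b ξ V c) (hc' : c' < L)
    (hcol' : ∀ y ∈ column (b.1 + c') b.2 L, ξ' y = true) (hbot : ξ' (b.1 + c, b.2) = true)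
    (hrest : ∀ y ∈ column (b.1 + c) b.2 L, y ≠ (b.1 + c, b.2) → ξ' y = η y)
    (hξ' : Set.EqOn ξ' ξ (↑(column (b.1 + c) b.2 L ∪ column (b.1 + c') b.2 L))ᶜ) :
    SweepInv L η b ξ' (insert c' V) c' := by
  refine ⟨mem_insert_self c' V, insert_subset (mem_range.2 hc') h.subset, hcol', fun v hv => ?_,
    fun y hy => ?_⟩
  · by_cases hvc' : v = c'
    · exact hcol' _ (mem_column.2 ⟨by rw [hvc'], le_rfl, by omega⟩)
    by_cases hvc : v = c
    · exact hvc ▸ hbot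
    have hcols : (b.1 + v, b.2) ∉ column (b.1 + c) b.2 L ∪ column (b.1 + c') b.2 L := by
      simp only [mem_union, mem_column]
      omega
    rw [hξ' fun hv' => hcols (mem_coe.1 hv')]
    exact h.bottom v ((mem_insert.1 hv).resolve_left hvc')
  · by_cases hy₂ : y ∈ column (b.1 + c') b.2 L
    · exact mem_union_right _ hy₂
    refine mem_union_left _ ?_
    by_cases hy₁ : y ∈ column (b.1 + c) b.2 L
    · by_cases hlo : y = (b.1 + c, b.2)
      · exact mem_image.2 ⟨c, mem_insert_of_mem h.mem, hlo.symm⟩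
      · exact absurd (hrest y hy₁ hlo) hy
    rw [hξ' fun hy' => (mem_union.1 (mem_coe.1 hy')).elim hy₁ hy₂] at hy
    rcases mem_union.1 (h.mem_of_ne y hy) with hy | hy
    · exact image_subset_image (subset_insert c' V) hy
    · exact absurd hy hy₁

lemma step (hsus : boxAt L b ⊆ sus) (hseeds : ∀ c < L, ∃ j < L, η (b.1 + c, b.2 + j) = true)
    (h : SweepInv L η b ξ V c) (hc' : c' < L) (hadj : c' = c + 1 ∨ c' + 1 = c) :
    ∃ ξ', Reaches sus (boxAt L b) (fun θ => {y | θ y ≠ η y}.ncard ≤ 3 * L) (2 * L) ξ ξ' ∧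
      SweepInv L η b ξ' (insert c' V) c' := by
  have hc : c < L := mem_range.1 (h.subset h.mem)
  have hbox : ↑(column (b.1 + c) b.2 L ∪ column (b.1 + c') b.2 L) ⊆ boxAt L b := by
    rw [coe_union]
    exact Set.union_subset (column_subset_boxAt hc) (column_subset_boxAt hc')
  obtain ⟨s, hs, hseed⟩ := h.exists_seed (by omega) (hseeds c' hc')
  obtain ⟨ξ', hreach, hcol', hbot, hrest⟩ :=
    reaches_shift_column (f := η) (by omega) (hbox.trans hsus) h.col hs hseed
  refine ⟨ξ', hreach.eqOn_compl.mono le_rfl hbox fun θ hθ =>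
    ncard_le_three_mul (b := b) (c := c) (c' := c') h.subset fun y (hy : θ y ≠ η y) => ?_,
    h.shift hc' hcol' hbot hrest hreach.eqOn_compl.target.2⟩
  by_cases hcols : y ∈ (↑(column (b.1 + c) b.2 L ∪ column (b.1 + c') b.2 L) : Set Site)
  · rcases mem_union.1 (mem_coe.1 hcols) with hy' | hy' <;> simp [hy']
  rw [hθ.2 hcols] at hy
  rcases mem_union.1 (h.mem_of_ne y hy) with hy' | hy' <;> simp [hy']

lemma walk_left (hsus : boxAt L b ⊆ sus) (hseeds : ∀ c < L, ∃ j < L, η (b.1 + c, b.2 + j) = true)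
    (h : SweepInv L η b ξ V c) :
    ∃ ξ' V', Reaches sus (boxAt L b) (fun θ => {y | θ y ≠ η y}.ncard ≤ 3 * L) (2 * L * c) ξ ξ' ∧
      SweepInv L η b ξ' V' 0 := by
  induction c generalizing ξ V with
  | zero => exact ⟨ξ, V, Reaches.refl h.ncard_ne_le, h⟩
  | succ c ih =>
    have hc : c + 1 < L := mem_range.1 (h.subset h.mem)
    obtain ⟨ξ₁, h₁, hinv₁⟩ := h.step hsus hseeds (c' := c) (by omega) (Or.inr rfl)
    obtain ⟨ξ', V', h', hinv'⟩ := ih hinv₁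
    exact ⟨ξ', V', (h₁.trans h').mono (by ring_nf; rfl) subset_rfl fun _ h => h, hinv'⟩

lemma walk_right (hsus : boxAt L b ⊆ sus) (hseeds : ∀ c < L, ∃ j < L, η (b.1 + c, b.2 + j) = true)
    (h : SweepInv L η b ξ V c) (m : ℕ) (hm : c + m + 1 = L) :
    ∃ ξ' V', Reaches sus (boxAt L b) (fun θ => {y | θ y ≠ η y}.ncard ≤ 3 * L) (2 * L * m) ξ ξ' ∧
      SweepInv L η b ξ' V' (c + m) ∧ V ∪ Ico c L ⊆ V' := by
  induction m generalizing c ξ V with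
  | zero =>
    refine ⟨ξ, V, Reaches.refl h.ncard_ne_le, h, union_subset subset_rfl fun v hv => ?_⟩
    obtain rfl : v = c := by rw [mem_Ico] at hv; omega
    exact h.mem
  | succ m ih =>
    obtain ⟨ξ₁, h₁, hinv₁⟩ := h.step hsus hseeds (c' := c + 1) (by omega) (Or.inl rfl)
    obtain ⟨ξ', V', h', hinv', hV'⟩ := ih hinv₁ (by omega)
    refine ⟨ξ', V', (h₁.trans h').mono (by ring_nf; rfl) subset_rfl fun _ h => h,
      by rwa [← add_assoc, add_right_comm], fun v hv => hV' ?_⟩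
    rcases mem_union.1 hv with hv | hv
    · exact mem_union_left _ (mem_insert_of_mem hv)
    rcases eq_or_ne v c with rfl | hvc
    · exact mem_union_left _ (mem_insert_of_mem h.mem)
    · exact mem_union_right _ (mem_Ico.2 (by rw [mem_Ico] at hv; omega))

end SweepInv

theorem column_to_row :
    ∃ C : ℕ, ∀ (L : ℕ) (sus : Set Site) (η : Cfg) (b : Site),
    GoodBoxAt L sus η b →
    ∀ i : ℕ, i < L → InfColAt L sus η b i →
    ∃ (ms : ℕ → Move) (k : ℕ),
      k ≤ C * L ^ 2 ∧
      LegalSeq sus η ms k ∧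
      (∀ t < k, (ms t).1 ∈ boxAt L b) ∧
      (∃ j < L, InfRowAt L sus (evolve η ms k) b j) ∧
      (∀ y ∉ boxAt L b, evolve η ms k y = η y) ∧
      (∀ t ≤ k, {y : Site | evolve η ms t y ≠ η y}.ncard ≤ 3 * L) := by
  refine ⟨4, fun L sus η b hgood i hi hcol => ?_⟩
  have hsus : boxAt L b ⊆ sus := hgood.1
  have hseeds : ∀ c < L, ∃ j < L, η (b.1 + c, b.2 + j) = true :=
    fun c hc => (hgood.2.2 c hc).imp fun j hj => ⟨hj.1, hj.2.2⟩
  obtain ⟨ξ₁, V₁, h₁, hinv₁⟩ := (SweepInv.initial hi hcol).walk_left hsus hseeds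
  obtain ⟨ξ₂, V₂, h₂, hinv₂, hV₂⟩ := hinv₁.walk_right hsus hseeds (L - 1) (by omega)
  obtain ⟨ms, k, hk, hlegal, hsites, hQ, rfl⟩ := (h₁.trans h₂).eqOn_compl
  refine ⟨ms, k, hk.trans ?_, hlegal, hsites, ⟨0, by omega, fun v hv => ⟨hsus ?_, ?_⟩⟩,
    fun y hy => (hQ k le_rfl).2 hy, fun t ht => (hQ t ht).1⟩
  · have : i * L ≤ L * L := Nat.mul_le_mul_right L hi.le
    have : (L - 1) * L ≤ L * L := Nat.mul_le_mul_right L (Nat.sub_le L 1)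
    nlinarith
  · exact ⟨by simp, by simp; omega, by simp, by simp; omega⟩
  · simpa using hinv₂.bottom v (hV₂ (mem_union_right _ (mem_Ico.2 ⟨Nat.zero_le v, hv⟩)))
end
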